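/- Let N ≥ 3 be an integer, y₁ < y₂ < ⋯ < y_{2N} real numbers, and x ∈ (y₁, y₂) ∪ (y_{2N−1}, y_{2N}). For u in the closed upper half-plane with u ∉ {y₁,…,y_{2N}}, let Π(u) = ∏_{j=1}^{2N} exp(½ Log(u − y_j)), where Log is the principal branch of the complex logarithm. Define the (N−2)×(N−2) complex matrix R̃ by R̃(i,j) = ∫_{y_{2i+1}}^{y_{2i+2}} u^{j−1} / (Π(u)·(u − x)²) du for 1 ≤ i, j ≤ N−2. Then det R̃ = ∫_{y₃}^{y₄} ⋯ ∫_{y_{2N−3}}^{y_{2N−2}} ∏_{1 ≤ i < j ≤ N−2} (u_j − u_i) · ∏_{i=1}^{N−2} du_i / (Π(u_i)·(u_i − x)²), this quantity is nonzero, and consequently R̃ is invertible. -/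

import Mathlib

open Set Filter Complex MeasureTheory intervalIntegral

noncomputable section

lemma exp_half_log_pos {t : ℝ} (ht : 0 < t) :
    Complex.exp ((1 / 2 : ℂ) * Complex.log (t : ℂ)) = (Real.sqrt t : ℂ) := by
  rw [← Complex.ofReal_log ht.le]
  have h1 : (1 / 2 : ℂ) * (Real.log t : ℂ) = ((1 / 2 * Real.log t : ℝ) : ℂ) := by push_cast; ring
  rw [h1, ← Complex.ofReal_exp]
  norm_cast
  rw [Real.sqrt_eq_rpow, Real.rpow_def_of_pos ht]
  ring_nf

lemma exp_half_log_neg {t : ℝ} (ht : t < 0) :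
    Complex.exp ((1 / 2 : ℂ) * Complex.log (t : ℂ)) = Complex.I * (Real.sqrt (-t) : ℂ) := by
  have habs : ‖(t : ℂ)‖ = -t := by
    rw [Complex.norm_real, Real.norm_eq_abs, abs_of_neg ht]
  have harg : Complex.arg (t : ℂ) = Real.pi := Complex.arg_ofReal_of_neg ht
  rw [show Complex.log (t : ℂ) = (Real.log ‖(t:ℂ)‖ : ℂ) + (Complex.arg (t:ℂ)) * Complex.I from rfl, habs, harg]
  rw [mul_add, Complex.exp_add]
  have h1 : (1 / 2 : ℂ) * (Real.log (-t) : ℂ) = ((1 / 2 * Real.log (-t) : ℝ) : ℂ) := by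
    push_cast; ring
  have h2 : Complex.exp ((1 / 2 : ℂ) * ((Real.pi : ℂ) * Complex.I)) = Complex.I := by
    have : (1 / 2 : ℂ) * ((Real.pi : ℂ) * Complex.I) = ((Real.pi / 2 : ℝ) : ℂ) * Complex.I := by
      push_cast; ring
    rw [this, Complex.exp_mul_I, ← Complex.ofReal_cos, ← Complex.ofReal_sin,
      Real.cos_pi_div_two, Real.sin_pi_div_two]
    simp
  rw [h1, ← Complex.ofReal_exp, h2]
  have : Real.exp (1 / 2 * Real.log (-t)) = Real.sqrt (-t) := by
    rw [Real.sqrt_eq_rpow, Real.rpow_def_of_pos (by linarith : (0:ℝ) < -t)]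
    ring_nf
  rw [this]; ring

/-- The positive real product `∏ √|u - y j|`. -/
def rho (N : ℕ) (y : ℕ → ℝ) (u : ℝ) : ℝ :=
  ∏ j ∈ Finset.Icc 1 (2 * N), Real.sqrt |u - y j|

/-- `sqrtProd N y u = ∏_{j=1}^{2N} (u - y_j)^{1/2}`, the branch defined via the principal
logarithm, which is positive for real `u > y_{2N}`. -/
def sqrtProd (N : ℕ) (y : ℕ → ℝ) (u : ℂ) : ℂ :=
  ∏ j ∈ Finset.Icc 1 (2 * N), Complex.exp ((1 / 2 : ℂ) * Complex.log (u - (y j : ℂ)))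

lemma sqrtProd_ne_zero (N : ℕ) (y : ℕ → ℝ) (u : ℂ) : sqrtProd N y u ≠ 0 :=
  Finset.prod_ne_zero_iff.2 fun _ _ => Complex.exp_ne_zero _

lemma rho_pos {N : ℕ} {y : ℕ → ℝ} {u : ℝ} (h : ∀ j, 1 ≤ j → j ≤ 2 * N → u ≠ y j) :
    0 < rho N y u := by
  refine Finset.prod_pos fun j hj => ?_
  rw [Finset.mem_Icc] at hj
  exact Real.sqrt_pos.2 (abs_pos.2 (sub_ne_zero.2 (h j hj.1 hj.2)))

lemma sqrtProd_eq (N : ℕ) (y : ℕ → ℝ) (k : ℕ) (u : ℝ)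
    (h : ∀ j, 1 ≤ j → j ≤ 2 * N → (j ≤ k ↔ y j < u))
    (h' : ∀ j, 1 ≤ j → j ≤ 2 * N → u ≠ y j) :
    sqrtProd N y (u : ℂ) = Complex.I ^ (2 * N - k) * ((rho N y u : ℝ) : ℂ) := by
  have step : ∀ j ∈ Finset.Icc 1 (2 * N),
      Complex.exp ((1 / 2 : ℂ) * Complex.log ((u : ℂ) - (y j : ℂ))) =
        (if j ≤ k then ((Real.sqrt |u - y j| : ℝ) : ℂ)
          else Complex.I * ((Real.sqrt |u - y j| : ℝ) : ℂ)) := by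
    intro j hj
    rw [Finset.mem_Icc] at hj
    have hcast : (u : ℂ) - (y j : ℂ) = ((u - y j : ℝ) : ℂ) := by push_cast; ring
    by_cases hjk : j ≤ k
    · have hlt : y j < u := (h j hj.1 hj.2).1 hjk
      rw [if_pos hjk, hcast, exp_half_log_pos (by linarith), abs_of_pos (by linarith)]
    · have hlt : u < y j := by
        rcases lt_trichotomy u (y j) with hc | hc | hc
        · exact hc
        · exact absurd hc (h' j hj.1 hj.2)
        · exact absurd ((h j hj.1 hj.2).2 hc) hjk
      rw [if_neg hjk, hcast, exp_half_log_neg (by linarith),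
        show |u - y j| = -(u - y j) from abs_of_neg (by linarith)]
  have hcard : ((Finset.Icc 1 (2 * N)).filter (fun j => ¬ j ≤ k)).card = 2 * N - k := by
    have : (Finset.Icc 1 (2 * N)).filter (fun j => ¬ j ≤ k) = Finset.Icc (k + 1) (2 * N) := by
      ext j; simp only [Finset.mem_filter, Finset.mem_Icc]; omega
    rw [this, Nat.card_Icc]; omega
  rw [sqrtProd, Finset.prod_congr rfl step, Finset.prod_ite, Finset.prod_mul_distrib,
    Finset.prod_const, hcard, rho]
  push_cast
  rw [← Finset.prod_filter_mul_prod_filter_not (Finset.Icc 1 (2 * N)) (fun j => j ≤ k)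
    (fun j => ((Real.sqrt |u - y j| : ℝ) : ℂ))]
  ring

section Interval

variable {N : ℕ} {y : ℕ → ℝ} {x : ℝ}
variable (hN : 3 ≤ N) (hy : ∀ i j : ℕ, 1 ≤ i → i < j → j ≤ 2 * N → y i < y j)

include hy in
lemma hyle : ∀ p q : ℕ, 1 ≤ p → p ≤ q → q ≤ 2 * N → y p ≤ y q := by
  intro p q h1 h2 h3
  rcases eq_or_lt_of_le h2 with rfl | h
  · exact le_rfl
  · exact (hy p q h1 h h3).le

include hy in
lemma interval_iff {i : ℕ} (hi : i < N - 2) {u : ℝ}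
    (hu : u ∈ Set.Ioo (y (2 * i + 3)) (y (2 * i + 4))) (hN : 3 ≤ N) :
    ∀ j, 1 ≤ j → j ≤ 2 * N → (j ≤ 2 * i + 3 ↔ y j < u) := by
  intro j h1 h2
  have hb1 : 2 * i + 4 ≤ 2 * N := by omega
  constructor
  · intro hj
    exact lt_of_le_of_lt (hyle hy j (2 * i + 3) h1 hj (by omega)) hu.1
  · intro hj
    by_contra hc
    have : y (2 * i + 4) ≤ y j := hyle hy (2 * i + 4) j (by omega) (by omega) h2
    linarith [hu.2]

include hy in
lemma interval_ne {i : ℕ} (hi : i < N - 2) {u : ℝ}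
    (hu : u ∈ Set.Ioo (y (2 * i + 3)) (y (2 * i + 4))) (hN : 3 ≤ N) :
    ∀ j, 1 ≤ j → j ≤ 2 * N → u ≠ y j := by
  intro j h1 h2
  rcases le_or_gt j (2 * i + 3) with hj | hj
  · have := (interval_iff hy hi hu hN j h1 h2).1 hj; linarith
  · have : y (2 * i + 4) ≤ y j := hyle hy (2 * i + 4) j (by omega) (by omega) h2
    have := hu.2; intro h; linarith

include hy in
lemma sqrtProd_on_interval {i : ℕ} (hi : i < N - 2) {u : ℝ}
    (hu : u ∈ Set.Ioo (y (2 * i + 3)) (y (2 * i + 4))) (hN : 3 ≤ N) :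
    sqrtProd N y (u : ℂ) =
      Complex.I ^ (2 * N - (2 * i + 3)) * ((rho N y u : ℝ) : ℂ) :=
  sqrtProd_eq N y (2 * i + 3) u (interval_iff hy hi hu hN) (interval_ne hy hi hu hN)

include hy in
lemma x_outside (hN : 3 ≤ N)
    (hx : x ∈ Set.Ioo (y 1) (y 2) ∪ Set.Ioo (y (2 * N - 1)) (y (2 * N)))
    {i : ℕ} (hi : i < N - 2) :
    x < y (2 * i + 3) ∨ y (2 * i + 4) < x := by
  rcases hx with hx | hx
  · left
    exact lt_of_lt_of_le hx.2 (hyle hy 2 (2 * i + 3) (by omega) (by omega) (by omega))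
  · right
    exact lt_of_le_of_lt (hyle hy (2 * i + 4) (2 * N - 1) (by omega) (by omega) (by omega)) hx.1

end Interval

lemma integrableOn_inv_sqrt_sub {a c : ℝ} :
    IntegrableOn (fun u : ℝ => (u - a) ^ (-(1/2) : ℝ)) (Set.Ioc a c) volume := by
  have h := (intervalIntegrable_rpow' (a := 0) (b := c - a)
    (r := -(1/2)) (by norm_num)).comp_sub_right a
  rw [zero_add, sub_add_cancel] at h
  rcases le_or_gt a c with hac | hac
  · rw [intervalIntegrable_iff, uIoc_of_le hac] at h; exact h
  · rw [Set.Ioc_eq_empty (by exact fun hcon => absurd hcon (not_lt.2 hac.le))]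
    exact integrableOn_empty

lemma integrableOn_inv_sqrt_sub' {b c : ℝ} :
    IntegrableOn (fun u : ℝ => (b - u) ^ (-(1/2) : ℝ)) (Set.Ioc c b) volume := by
  have h := (intervalIntegrable_rpow' (a := 0) (b := b - c)
    (r := -(1/2)) (by norm_num)).comp_sub_left b
  rw [sub_zero, sub_sub_cancel] at h
  rcases le_or_gt c b with hcb | hcb
  · rw [intervalIntegrable_iff, uIoc_of_ge hcb] at h
    exact h
  · rw [Set.Ioc_eq_empty (not_lt.2 hcb.le)]
    exact integrableOn_empty

/-- `((√(u-a))⁻¹ (√(b-u))⁻¹` is integrable on `(a,b)`. -/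
lemma integrableOn_inv_sqrt_mul {a b : ℝ} (hab : a < b) :
    IntegrableOn (fun u : ℝ => (Real.sqrt (u - a))⁻¹ * (Real.sqrt (b - u))⁻¹)
      (Set.Ioo a b) volume := by
  set m := (a + b) / 2 with hm
  have ham : a < m := by rw [hm]; linarith
  have hmb : m < b := by rw [hm]; linarith
  have hmeas : Measurable fun u : ℝ => (Real.sqrt (u - a))⁻¹ * (Real.sqrt (b - u))⁻¹ := by
    fun_prop
  have h1 : IntegrableOn (fun u : ℝ => (Real.sqrt (u - a))⁻¹ * (Real.sqrt (b - u))⁻¹)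
      (Set.Ioc a m) volume := by
    refine Integrable.mono' ((integrableOn_inv_sqrt_sub (a := a) (c := m)).const_mul
      ((Real.sqrt (b - m))⁻¹)) hmeas.aestronglyMeasurable ?_
    rw [ae_restrict_iff' measurableSet_Ioc]
    refine ae_of_all _ fun u hu => ?_
    have h1 : 0 < u - a := by linarith [hu.1]
    have h2 : 0 < b - u := by linarith [hu.2]
    rw [Real.norm_eq_abs, _root_.abs_of_nonneg (by positivity)]
    rw [mul_comm ((Real.sqrt (b - m))⁻¹)]
    have hsq : (u - a) ^ (-(1/2) : ℝ) = (Real.sqrt (u - a))⁻¹ := by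
      rw [Real.rpow_neg h1.le, Real.sqrt_eq_rpow]
    rw [hsq]
    refine mul_le_mul_of_nonneg_left ?_ (by positivity)
    exact inv_anti₀ (Real.sqrt_pos.2 (by linarith [hu.2])) (Real.sqrt_le_sqrt (by linarith [hu.2]))
  have h2 : IntegrableOn (fun u : ℝ => (Real.sqrt (u - a))⁻¹ * (Real.sqrt (b - u))⁻¹)
      (Set.Ioc m b) volume := by
    refine Integrable.mono' ((integrableOn_inv_sqrt_sub' (b := b) (c := m)).const_mul
      ((Real.sqrt (m - a))⁻¹)) hmeas.aestronglyMeasurable ?_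
    rw [ae_restrict_iff' measurableSet_Ioc]
    refine ae_of_all _ fun u hu => ?_
    have h1 : 0 < u - a := by linarith [hu.1]
    have h2 : 0 ≤ b - u := by linarith [hu.2]
    rw [Real.norm_eq_abs, _root_.abs_of_nonneg (by positivity)]
    have hsq : (b - u) ^ (-(1/2) : ℝ) = (Real.sqrt (b - u))⁻¹ := by
      rw [Real.rpow_neg h2, Real.sqrt_eq_rpow]
    rw [hsq]
    refine mul_le_mul_of_nonneg_right ?_ (by positivity)
    exact inv_anti₀ (Real.sqrt_pos.2 (by linarith [ham])) (Real.sqrt_le_sqrt (by linarith [hu.1]))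
  exact (h1.union h2).mono_set (fun u hu => by
    rcases le_or_gt u m with h | h
    · exact Set.mem_union_left _ ⟨hu.1, h⟩
    · exact Set.mem_union_right _ ⟨h, hu.2.le⟩)

lemma measurable_sqrtProd (N : ℕ) (y : ℕ → ℝ) :
    Measurable fun u : ℝ => sqrtProd N y (u : ℂ) := by
  unfold sqrtProd
  refine Finset.measurable_prod _ fun j _ => ?_
  exact Complex.measurable_exp.comp (measurable_const.mul
    (Complex.measurable_log.comp (Complex.measurable_ofReal.sub measurable_const)))

lemma measurable_F (N : ℕ) (y : ℕ → ℝ) (x : ℝ) (e : ℕ) :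
    Measurable fun u : ℝ => (u : ℂ) ^ e / (sqrtProd N y (u : ℂ) * ((u : ℂ) - (x : ℂ)) ^ 2) := by
  exact (Complex.measurable_ofReal.pow_const e).div ((measurable_sqrtProd N y).mul
    ((Complex.measurable_ofReal.sub measurable_const).pow_const 2))

section Key

variable {N : ℕ} {y : ℕ → ℝ} {x : ℝ}

lemma key_integrableOn (hN : 3 ≤ N)
    (hy : ∀ i j : ℕ, 1 ≤ i → i < j → j ≤ 2 * N → y i < y j)
    (hx : x ∈ Set.Ioo (y 1) (y 2) ∪ Set.Ioo (y (2 * N - 1)) (y (2 * N)))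
    {i : ℕ} (hi : i < N - 2) (e : ℕ) :
    IntegrableOn (fun u : ℝ => (u : ℂ) ^ e / (sqrtProd N y (u : ℂ) * ((u : ℂ) - (x : ℂ)) ^ 2))
      (Set.Ioo (y (2 * i + 3)) (y (2 * i + 4))) volume := by
  set a := y (2 * i + 3) with ha
  set b := y (2 * i + 4) with hb
  have hab : a < b := hy _ _ (by omega) (by omega) (by omega)
  have hxout : x < a ∨ b < x := x_outside hy hN hx hi
  set S' : Finset ℕ := ((Finset.Icc 1 (2 * N)).erase (2 * i + 3)).erase (2 * i + 4) with hS'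
  set P : ℝ → ℝ := fun u => ∏ j ∈ S', Real.sqrt |u - y j| with hP
  have hPcont : Continuous P := by
    refine continuous_finset_prod _ fun j _ => ?_
    exact Real.continuous_sqrt.comp ((continuous_id.sub continuous_const).abs)
  have hPpos : ∀ u ∈ Set.Icc a b, 0 < P u := by
    intro u hu
    refine Finset.prod_pos fun j hj => ?_
    rw [hS', Finset.mem_erase, Finset.mem_erase, Finset.mem_Icc] at hj
    obtain ⟨hj4, hj3, hj1, hj2⟩ := hj
    have : y j < a ∨ b < y j := by
      rcases lt_or_ge j (2 * i + 3) with hc | hc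
      · left; exact hy j (2 * i + 3) hj1 hc (by omega)
      · right; exact hy (2 * i + 4) j (by omega) (by omega) hj2
    have hne : u ≠ y j := by
      rcases this with h | h
      · intro hcon; rw [hcon] at hu; linarith [hu.1]
      · intro hcon; rw [hcon] at hu; linarith [hu.2]
    exact Real.sqrt_pos.2 (abs_pos.2 (sub_ne_zero.2 hne))
  have hxne : ∀ u ∈ Set.Icc a b, u - x ≠ 0 := by
    intro u hu
    rcases hxout with h | h
    · have := hu.1; intro hc; rw [sub_eq_zero] at hc; linarith
    · have := hu.2; intro hc; rw [sub_eq_zero] at hc; linarith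
  set h : ℝ → ℝ := fun u => |u| ^ e / ((u - x) ^ 2 * P u) with hh
  have hcont : ContinuousOn h (Set.Icc a b) := by
    refine ContinuousOn.div ((_root_.continuous_abs.pow e).continuousOn) ?_ ?_
    · exact (((continuous_id.sub continuous_const).pow 2).mul hPcont).continuousOn
    · intro u hu
      exact mul_ne_zero (pow_ne_zero 2 (hxne u hu)) (hPpos u hu).ne'
  obtain ⟨C, hC⟩ := isCompact_Icc.exists_bound_of_continuousOn hcont
  refine Integrable.mono' ((integrableOn_inv_sqrt_mul hab).const_mul C)
    (measurable_F N y x e).aestronglyMeasurable ?_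
  rw [ae_restrict_iff' measurableSet_Ioo]
  refine ae_of_all _ fun u hu => ?_
  have hmem : ∀ j, 1 ≤ j → j ≤ 2 * N → u ≠ y j := interval_ne hy hi hu hN
  have hrho : sqrtProd N y (u : ℂ) =
      Complex.I ^ (2 * N - (2 * i + 3)) * ((rho N y u : ℝ) : ℂ) :=
    sqrtProd_on_interval hy hi hu hN
  have hrhopos : 0 < rho N y u := rho_pos hmem
  have hua : 0 < u - a := by have := hu.1; linarith
  have hub : 0 < b - u := by have := hu.2; linarith
  -- norm computation
  have hnorm : ‖(u : ℂ) ^ e / (sqrtProd N y (u : ℂ) * ((u : ℂ) - (x : ℂ)) ^ 2)‖ =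
      |u| ^ e / (rho N y u * (u - x) ^ 2) := by
    rw [norm_div, norm_pow, hrho]
    have h1 : ‖(u : ℂ)‖ = |u| := Complex.norm_real u
    have h2 : (u : ℂ) - (x : ℂ) = ((u - x : ℝ) : ℂ) := by push_cast; ring
    rw [h1, h2, norm_mul, norm_mul, norm_pow, norm_pow, Complex.norm_I, one_pow, one_mul,
      Complex.norm_real, Complex.norm_real, Real.norm_eq_abs, Real.norm_eq_abs,
      _root_.abs_of_pos hrhopos, _root_.sq_abs]
  rw [hnorm]
  -- decompose rho
  have hrhodec : rho N y u = Real.sqrt (u - a) * (Real.sqrt (b - u) * P u) := by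
    rw [rho]
    rw [← Finset.mul_prod_erase _ _ (show 2 * i + 3 ∈ Finset.Icc 1 (2 * N) by
      rw [Finset.mem_Icc]; omega)]
    rw [← Finset.mul_prod_erase _ _ (show 2 * i + 4 ∈ (Finset.Icc 1 (2 * N)).erase (2 * i + 3) by
      rw [Finset.mem_erase, Finset.mem_Icc]; exact ⟨by omega, by omega⟩)]
    have h3 : |u - b| = b - u := by rw [abs_sub_comm, _root_.abs_of_pos hub]
    rw [_root_.abs_of_pos hua, h3]
  have hsqa : (0:ℝ) < Real.sqrt (u - a) := Real.sqrt_pos.2 hua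
  have hsqb : (0:ℝ) < Real.sqrt (b - u) := Real.sqrt_pos.2 hub
  have hPu : 0 < P u := hPpos u ⟨by linarith, by linarith⟩
  have hxu : u - x ≠ 0 := hxne u ⟨by linarith, by linarith⟩
  have keyeq : |u| ^ e / (rho N y u * (u - x) ^ 2) =
      h u * ((Real.sqrt (u - a))⁻¹ * (Real.sqrt (b - u))⁻¹) := by
    rw [hrhodec, hh]
    field_simp
  rw [keyeq]
  refine mul_le_mul_of_nonneg_right ?_ (by positivity)
  exact le_trans (le_abs_self _) (le_trans (le_of_eq (Real.norm_eq_abs _).symm)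
    (hC u ⟨by linarith, by linarith⟩))

end Key

lemma filter_lt_eq_Ioi {n : ℕ} (i : Fin n) :
    Finset.univ.filter (fun j => i < j) = Finset.Ioi i := by
  ext j; simp

lemma vand_sum {n : ℕ} (w : Fin n → ℂ) :
    ∑ σ : Equiv.Perm (Fin n), ((Equiv.Perm.sign σ : ℤ) : ℂ) * ∏ i, w i ^ ((σ i : Fin n) : ℕ)
      = ∏ i : Fin n, ∏ j ∈ Finset.Ioi i, (w j - w i) := by
  rw [← Matrix.det_vandermonde w, ← Matrix.det_transpose, Matrix.det_apply']
  refine Finset.sum_congr rfl fun σ _ => ?_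
  rfl

/-- The matrix `R̃(i,j) = ∫_{y_{2i+1}}^{y_{2i+2}} u^{j-1} / (Π(u)(u-x)²) du`, `1 ≤ i,j ≤ N-2`
(written here with `0`-based indices `i j : Fin (N-2)`). -/
def schwarzChristoffelMatrixVar (N : ℕ) (y : ℕ → ℝ) (x : ℝ) :
    Matrix (Fin (N - 2)) (Fin (N - 2)) ℂ :=
  Matrix.of fun i j =>
    ∫ u in (y (2 * (i : ℕ) + 3))..(y (2 * (i : ℕ) + 4)),
      ((u : ℂ) ^ (j : ℕ)) / (sqrtProd N y u * ((u : ℂ) - (x : ℂ)) ^ 2)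


/-- The Vandermonde/Andréief identity for `det R̃`, its nonvanishing, and the invertibility
of `R̃`. -/
theorem schwarzChristoffelMatrixVar_det (N : ℕ) (hN : 3 ≤ N) (y : ℕ → ℝ)
    (hy : ∀ i j : ℕ, 1 ≤ i → i < j → j ≤ 2 * N → y i < y j)
    (x : ℝ) (hx : x ∈ Set.Ioo (y 1) (y 2) ∪ Set.Ioo (y (2 * N - 1)) (y (2 * N))) :
    (schwarzChristoffelMatrixVar N y x).det =
      (∫ u in Set.univ.pi fun i : Fin (N - 2) =>
          Set.Ioo (y (2 * (i : ℕ) + 3)) (y (2 * (i : ℕ) + 4)),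
        (∏ i : Fin (N - 2), ∏ j ∈ Finset.univ.filter (fun j => i < j),
            (((u j : ℝ) : ℂ) - ((u i : ℝ) : ℂ))) *
          ∏ i : Fin (N - 2),
            (1 / (sqrtProd N y (u i) * (((u i : ℝ) : ℂ) - (x : ℂ)) ^ 2))) ∧
    (∫ u in Set.univ.pi fun i : Fin (N - 2) =>
          Set.Ioo (y (2 * (i : ℕ) + 3)) (y (2 * (i : ℕ) + 4)),
        (∏ i : Fin (N - 2), ∏ j ∈ Finset.univ.filter (fun j => i < j),
            (((u j : ℝ) : ℂ) - ((u i : ℝ) : ℂ))) *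
          ∏ i : Fin (N - 2),
            (1 / (sqrtProd N y (u i) * (((u i : ℝ) : ℂ) - (x : ℂ)) ^ 2))) ≠ 0 ∧
    IsUnit (schwarzChristoffelMatrixVar N y x) := by
  classical
  set n := N - 2 with hn
  set F : ℕ → ℝ → ℂ :=
    fun e u => (u : ℂ) ^ e / (sqrtProd N y (u : ℂ) * ((u : ℂ) - (x : ℂ)) ^ 2) with hF
  set t : Fin n → Set ℝ :=
    fun i => Set.Ioo (y (2 * (i : ℕ) + 3)) (y (2 * (i : ℕ) + 4)) with ht
  set s : Set (Fin n → ℝ) := Set.univ.pi t with hs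
  set G : (Fin n → ℝ) → ℂ := fun u =>
    (∏ i : Fin n, ∏ j ∈ Finset.univ.filter (fun j => i < j),
        (((u j : ℝ) : ℂ) - ((u i : ℝ) : ℂ))) *
      ∏ i : Fin n, (1 / (sqrtProd N y (u i) * (((u i : ℝ) : ℂ) - (x : ℂ)) ^ 2)) with hG
  have hnlt : ∀ i : Fin n, (i : ℕ) < N - 2 := fun i => by have := i.isLt; omega
  have hab : ∀ i : Fin n, y (2 * (i : ℕ) + 3) < y (2 * (i : ℕ) + 4) :=
    fun i => hy _ _ (by omega) (by omega) (by have := hnlt i; omega)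
  have hsmeas : MeasurableSet s := MeasurableSet.univ_pi fun i => measurableSet_Ioo
  have hFint : ∀ (i : Fin n) (e : ℕ), IntegrableOn (F e) (t i) volume :=
    fun i e => key_integrableOn hN hy hx (hnlt i) e
  have hind : ∀ (i : Fin n) (e : ℕ), Integrable ((t i).indicator (F e)) volume :=
    fun i e => (integrable_indicator_iff measurableSet_Ioo).2 (hFint i e)
  have hentry : ∀ i j : Fin n,
      schwarzChristoffelMatrixVar N y x i j = ∫ u in t i, F (j : ℕ) u := by
    intro i j
    have h1 : schwarzChristoffelMatrixVar N y x i j =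
        ∫ u in (y (2 * (i : ℕ) + 3))..(y (2 * (i : ℕ) + 4)), F (j : ℕ) u := rfl
    rw [h1, intervalIntegral.integral_of_le (hab i).le, integral_Ioc_eq_integral_Ioo]
  have hsum_int : ∀ σ : Equiv.Perm (Fin n),
      Integrable (fun v : Fin n → ℝ =>
        ((Equiv.Perm.sign σ : ℤ) : ℂ) *
          ∏ i, (t i).indicator (F ((σ i : Fin n) : ℕ)) (v i)) volume := by
    intro σ
    exact (Integrable.fintype_prod
      (f := fun i => (t i).indicator (F ((σ i : Fin n) : ℕ)))
      (fun i => hind i _)).const_mul _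
  have hpoint : ∀ v : Fin n → ℝ,
      (∑ σ : Equiv.Perm (Fin n),
        ((Equiv.Perm.sign σ : ℤ) : ℂ) *
          ∏ i, (t i).indicator (F ((σ i : Fin n) : ℕ)) (v i)) = s.indicator G v := by
    intro v
    by_cases hv : v ∈ s
    · have hvi : ∀ i, v i ∈ t i := fun i => hv i (Set.mem_univ i)
      rw [Set.indicator_of_mem hv]
      have h1 : ∀ σ : Equiv.Perm (Fin n),
          (∏ i, (t i).indicator (F ((σ i : Fin n) : ℕ)) (v i))
            = (∏ i, ((v i : ℝ) : ℂ) ^ ((σ i : Fin n) : ℕ)) *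
              ∏ i : Fin n, (1 / (sqrtProd N y (v i) * (((v i : ℝ) : ℂ) - (x : ℂ)) ^ 2)) := by
        intro σ
        rw [← Finset.prod_mul_distrib]
        refine Finset.prod_congr rfl fun i _ => ?_
        rw [Set.indicator_of_mem (hvi i)]
        simp only [hF]
        rw [div_eq_mul_one_div]
      calc (∑ σ : Equiv.Perm (Fin n),
            ((Equiv.Perm.sign σ : ℤ) : ℂ) *
              ∏ i, (t i).indicator (F ((σ i : Fin n) : ℕ)) (v i))
          = (∑ σ : Equiv.Perm (Fin n),
              ((Equiv.Perm.sign σ : ℤ) : ℂ) * ∏ i, ((v i : ℝ) : ℂ) ^ ((σ i : Fin n) : ℕ)) *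
            ∏ i : Fin n, (1 / (sqrtProd N y (v i) * (((v i : ℝ) : ℂ) - (x : ℂ)) ^ 2)) := by
            rw [Finset.sum_mul]
            refine Finset.sum_congr rfl fun σ _ => ?_
            rw [h1 σ, mul_assoc]
        _ = G v := by
            rw [vand_sum (fun i => ((v i : ℝ) : ℂ))]
            simp only [hG]
            simp_rw [filter_lt_eq_Ioi]
    · rw [Set.indicator_of_notMem hv]
      refine Finset.sum_eq_zero fun σ _ => ?_
      rw [hs, Set.mem_pi] at hv
      push_neg at hv
      obtain ⟨i, -, hi⟩ := hv
      rw [Finset.prod_eq_zero (Finset.mem_univ i) (Set.indicator_of_notMem hi _), mul_zero]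
  have hdet1 : (schwarzChristoffelMatrixVar N y x).det = ∫ v in s, G v := by
    rw [← Matrix.det_transpose, Matrix.det_apply']
    have step1 : ∀ σ : Equiv.Perm (Fin n),
        (∏ i, (schwarzChristoffelMatrixVar N y x).transpose (σ i) i)
          = ∫ v : Fin n → ℝ, ∏ i, (t i).indicator (F ((σ i : Fin n) : ℕ)) (v i) := by
      intro σ
      rw [MeasureTheory.integral_fintype_prod_volume_eq_prod
        (f := fun i => (t i).indicator (F ((σ i : Fin n) : ℕ)))]
      refine Finset.prod_congr rfl fun i _ => ?_
      rw [Matrix.transpose_apply, hentry i (σ i),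
        ← MeasureTheory.integral_indicator (show MeasurableSet (t i) from measurableSet_Ioo)]
    calc (∑ σ : Equiv.Perm (Fin n), ((Equiv.Perm.sign σ : ℤ) : ℂ) *
            ∏ i, (schwarzChristoffelMatrixVar N y x).transpose (σ i) i)
        = ∑ σ : Equiv.Perm (Fin n), ∫ v : Fin n → ℝ, ((Equiv.Perm.sign σ : ℤ) : ℂ) *
            ∏ i, (t i).indicator (F ((σ i : Fin n) : ℕ)) (v i) := by
          refine Finset.sum_congr rfl fun σ _ => ?_
          rw [step1 σ, MeasureTheory.integral_const_mul]
      _ = ∫ v : Fin n → ℝ, ∑ σ : Equiv.Perm (Fin n), ((Equiv.Perm.sign σ : ℤ) : ℂ) *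
            ∏ i, (t i).indicator (F ((σ i : Fin n) : ℕ)) (v i) :=
          (integral_finset_sum _ fun σ _ => hsum_int σ).symm
      _ = ∫ v : Fin n → ℝ, s.indicator G v := by simp_rw [hpoint]
      _ = ∫ v in s, G v := MeasureTheory.integral_indicator hsmeas
  have hGind : Integrable (s.indicator G) volume := by
    have h2 : s.indicator G = fun v => ∑ σ : Equiv.Perm (Fin n),
        ((Equiv.Perm.sign σ : ℤ) : ℂ) *
          ∏ i, (t i).indicator (F ((σ i : Fin n) : ℕ)) (v i) := (funext hpoint).symm
    rw [h2]
    exact integrable_finset_sum _ fun σ _ => hsum_int σ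
  have hGint : IntegrableOn G s volume := (integrable_indicator_iff hsmeas).1 hGind
  set c : ℂ := ∏ i : Fin n, (Complex.I ^ (2 * N - (2 * (i : ℕ) + 3)))⁻¹ with hc
  have hcne : c ≠ 0 := Finset.prod_ne_zero_iff.2 fun i _ =>
    inv_ne_zero (pow_ne_zero _ Complex.I_ne_zero)
  set R : (Fin n → ℝ) → ℝ := fun v =>
    (∏ i : Fin n, ∏ j ∈ Finset.univ.filter (fun j => i < j), (v j - v i)) *
      ∏ i : Fin n, (rho N y (v i) * (v i - x) ^ 2)⁻¹ with hR
  have hvx : ∀ (i : Fin n) (v : Fin n → ℝ), v i ∈ t i → v i - x ≠ 0 := by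
    intro i v hvi
    rcases x_outside hy hN hx (hnlt i) with h | h
    · have := hvi.1; intro hcon; rw [sub_eq_zero] at hcon; rw [hcon] at this; linarith
    · have := hvi.2; intro hcon; rw [sub_eq_zero] at hcon; rw [hcon] at this; linarith
  have hGR : ∀ v ∈ s, G v = c * ((R v : ℝ) : ℂ) := by
    intro v hv
    have hvi : ∀ i, v i ∈ t i := fun i => hv i (Set.mem_univ i)
    have hgi : ∀ i : Fin n,
        (1 / (sqrtProd N y (v i) * (((v i : ℝ) : ℂ) - (x : ℂ)) ^ 2))
          = (Complex.I ^ (2 * N - (2 * (i : ℕ) + 3)))⁻¹ *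
            (((rho N y (v i) * (v i - x) ^ 2)⁻¹ : ℝ) : ℂ) := by
      intro i
      have hrpos : 0 < rho N y (v i) := rho_pos (interval_ne hy (hnlt i) (hvi i) hN)
      have hrne : ((rho N y (v i) : ℝ) : ℂ) ≠ 0 := by
        exact_mod_cast hrpos.ne'
      have hIne : (Complex.I : ℂ) ^ (2 * N - (2 * (i : ℕ) + 3)) ≠ 0 :=
        pow_ne_zero _ Complex.I_ne_zero
      have hvxi : ((v i : ℝ) : ℂ) - (x : ℂ) ≠ 0 := by
        have := hvx i v (hvi i)
        intro hcon
        apply this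
        have : ((v i - x : ℝ) : ℂ) = 0 := by push_cast; rw [← hcon]
        exact_mod_cast this
      rw [sqrtProd_on_interval hy (hnlt i) (hvi i) hN]
      push_cast
      field_simp
    simp only [hG, hR]
    rw [Finset.prod_congr rfl (fun i _ => hgi i), Finset.prod_mul_distrib]
    push_cast
    ring
  have hRpos : ∀ v ∈ s, 0 < R v := by
    intro v hv
    have hvi : ∀ i, v i ∈ t i := fun i => hv i (Set.mem_univ i)
    simp only [hR]
    refine mul_pos (Finset.prod_pos fun i _ => Finset.prod_pos fun j hj => ?_)
      (Finset.prod_pos fun i _ => ?_)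
    · rw [Finset.mem_filter] at hj
      have hij : (i : ℕ) < (j : ℕ) := hj.2
      have h1 : v i < y (2 * (i : ℕ) + 4) := (hvi i).2
      have h2 : y (2 * (j : ℕ) + 3) < v j := (hvi j).1
      have h3 : y (2 * (i : ℕ) + 4) ≤ y (2 * (j : ℕ) + 3) :=
        hyle hy _ _ (by omega) (by omega) (by have := hnlt j; omega)
      linarith
    · exact inv_pos.2 (mul_pos (rho_pos (interval_ne hy (hnlt i) (hvi i) hN))
        (pow_two_pos_of_ne_zero (hvx i v (hvi i))))
  have hJ : (∫ v in s, G v) = c * (((∫ v in s, R v) : ℝ) : ℂ) := by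
    rw [setIntegral_congr_fun hsmeas hGR, MeasureTheory.integral_const_mul]
    congr 1
    exact _root_.integral_ofReal
  have hRint : IntegrableOn R s volume := by
    have h1 : Integrable (fun v : Fin n → ℝ => (c⁻¹ * G v).re) (volume.restrict s) :=
      (hGint.const_mul c⁻¹).re
    refine h1.congr ((ae_restrict_iff' hsmeas).2 (ae_of_all _ fun v hv => ?_))
    show (c⁻¹ * G v).re = R v
    rw [hGR v hv, ← mul_assoc, inv_mul_cancel₀ hcne, one_mul, Complex.ofReal_re]
  have hμs : 0 < volume s := by
    rw [hs, volume_pi_pi]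
    refine CanonicallyOrderedAdd.prod_pos.2 fun i _ => ?_
    rw [show t i = Set.Ioo (y (2 * (i : ℕ) + 3)) (y (2 * (i : ℕ) + 4)) from rfl,
      Real.volume_Ioo]
    exact ENNReal.ofReal_pos.2 (by linarith [hab i])
  have hIRpos : 0 < ∫ v in s, R v := by
    rw [setIntegral_pos_iff_support_of_nonneg_ae
      ((ae_restrict_iff' hsmeas).2 (ae_of_all _ fun v hv => (hRpos v hv).le)) hRint]
    have hsupp : Function.support R ∩ s = s :=
      Set.inter_eq_self_of_subset_right fun v hv => (hRpos v hv).ne'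
    rw [hsupp]
    exact hμs
  have hJne : (∫ v in s, G v) ≠ 0 := by
    rw [hJ]
    exact mul_ne_zero hcne (by exact_mod_cast hIRpos.ne')
  exact ⟨hdet1, hJne, (Matrix.isUnit_iff_isUnit_det _).2
    (isUnit_iff_ne_zero.2 (by rw [hdet1]; exact hJne))⟩
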